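/- Let G be a locally compact quantum group with right regular representation V, left regular representation W, and self-adjoint unitary u_G = c J̌J. Define U := (u_G ⊗ 1)W*(u_G ⊗ 1). Then V₁₃ = U₁₂ V₁₃ W₃₂ U₁₂* as operators on L²(G) ⊗ L²(G) ⊗ L²(G); equivalently, U is a unitary intertwiner from the G-representation (L²(G) ⊗ L²(G), V₁₃W₃₂) to (L²(G) ⊗ L²(G), V₁₃). -/

import Mathlib

/-!
Conjugation by the involution `u₁` is multiplicative, fixes `W₃₂` and exchanges `V₁₃` with
`W₃₁`, so it carries `U₁₂ V₁₃ W₃₂ U₁₂*` to `W₁₂* W₃₁ W₃₂ W₁₂`. By the leg-permuted pentagon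
equation and `W₁₂* W₁₂ = 1` this is `W₃₁`, whose conjugate is `V₁₃`.
-/

section Involution

variable {M : Type*} [Monoid M]

theorem mul_mul_mul_mul_eq_self_of_mul_eq_one {a b : M} (h : b * a = 1) (x : M) :
    b * (a * x * b) * a = x := by
  rw [← mul_assoc, ← mul_assoc, h, one_mul, mul_assoc, h, mul_one]

def conjInvolution {u : M} (hu : u * u = 1) : M →* M where
  toFun x := u * x * u
  map_one' := by rw [mul_one, hu]
  map_mul' x y := by
    simp only [mul_assoc]
    rw [← mul_assoc u u, hu, one_mul]

theorem conjInvolution_apply {u : M} (hu : u * u = 1) (x : M) :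
    conjInvolution hu x = u * x * u :=
  rfl

theorem conjInvolution_conjInvolution {u : M} (hu : u * u = 1) (x : M) :
    conjInvolution hu (conjInvolution hu x) = x :=
  mul_mul_mul_mul_eq_self_of_mul_eq_one hu x

end Involution

theorem stmt_19_general {Mnd : Type*} [Monoid Mnd] [StarMul Mnd]
    (V13 W12 W31 W32 u1 : Mnd)
    -- unitarity of `W` (in the relevant leg):
    (hW12 : star W12 * W12 = 1)
    -- the pentagon equation for `W` in leg-permuted form:
    (hpentW' : W12 * W31 * star W12 = W31 * W32)
    -- `u_G` is a self-adjoint unitary: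
    (huu : u1 * u1 = 1)
    -- `(u_G ⊗ 1)V(u_G ⊗ 1) = W₂₁`, in its leg-(1,3) instance:
    (hrel : u1 * V13 * u1 = W31)
    -- `u1` acts on leg 1 only, `W32` on legs 2,3:
    (hcomm : Commute u1 W32) :
    V13 = (u1 * star W12 * u1) * V13 * W32 * (u1 * W12 * u1) := by
  set σ := conjInvolution huu
  have hσV : σ W31 = V13 := by
    rw [← hrel, ← conjInvolution_apply huu, conjInvolution_conjInvolution]
  have hσW : σ W32 = W32 := by
    rw [conjInvolution_apply, hcomm.eq, mul_assoc, huu, mul_one]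
  have hpent : star W12 * W31 * W32 * W12 = W31 := by
    rw [mul_assoc _ W31, ← hpentW', mul_mul_mul_mul_eq_self_of_mul_eq_one hW12]
  calc V13 = σ (star W12 * W31 * W32 * W12) := by rw [hpent, hσV]
    _ = σ (star W12) * σ W31 * σ W32 * σ W12 := by simp only [map_mul]
    _ = (u1 * star W12 * u1) * V13 * W32 * (u1 * W12 * u1) := by rw [hσV, hσW]; rfl

theorem stmt_19 {Mnd : Type*} [Monoid Mnd] [StarMul Mnd]
    (V12 V13 V23 W12 W13 W23 W31 W32 u1 : Mnd)
    -- unitarity of `W` (in the relevant leg):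
    (hW12 : star W12 * W12 = 1) (hW12' : W12 * star W12 = 1)
    -- pentagon equations:
    (hpentV : V12 * V13 * V23 = V23 * V12)
    (hpentW : W12 * W13 * W23 = W23 * W12)
    -- the pentagon equation for `W` in leg-permuted form:
    (hpentW' : W12 * W31 * star W12 = W31 * W32)
    -- `u_G` is a self-adjoint unitary:
    (husa : star u1 = u1) (huu : u1 * u1 = 1)
    -- `(u_G ⊗ 1)V(u_G ⊗ 1) = W₂₁`, in its leg-(1,3) instance:
    (hrel : u1 * V13 * u1 = W31)
    -- `u1` acts on leg 1 only, `W32` on legs 2,3: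
    (hcomm : Commute u1 W32) :
    V13 = (u1 * star W12 * u1) * V13 * W32 * (u1 * W12 * u1) :=
  stmt_19_general V13 W12 W31 W32 u1 hW12 hpentW' huu hrel hcomm
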